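/- Let N ≥ 1, let p : {1,…,N} → ℝ satisfy p_j ≥ 0 and Σ_j p_j = 1, let w : {1,…,N} → ℝ be arbitrary weights, and let K ≥ 1. Then (2π)^{−NK} ∫_{[0,2π]^{N×K}} Σ_{j,j'} w_j p_j p_{j'} ∏_{k=1}^K (1 + cos(φ_j^{(k)}) cos(φ_{j'}^{(k)})) dφ = ((3/2)^K − 1) Σ_j w_j p_j² + Σ_j w_j p_j. -/

import Mathlib

open MeasureTheory Finset Real

/-- Box integral of a product of single-coordinate functions equals the product
of one-dimensional integrals. -/
lemma box_integral_prod {ι : Type*} [Fintype ι] (f : ι → ℝ → ℝ) :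
    (∫ φ in Set.univ.pi fun _ : ι => Set.Icc (0 : ℝ) (2 * π), ∏ i, f i (φ i))
      = ∏ i, ∫ x in Set.Icc (0 : ℝ) (2 * π), f i x := by
  have hmeas : MeasurableSet (Set.univ.pi fun _ : ι => Set.Icc (0 : ℝ) (2 * π)) :=
    MeasurableSet.univ_pi fun _ => measurableSet_Icc
  rw [← integral_indicator hmeas]
  have key : ∀ φ : ι → ℝ,
      (Set.univ.pi fun _ : ι => Set.Icc (0 : ℝ) (2 * π)).indicator
        (fun φ => ∏ i, f i (φ i)) φ
        = ∏ i, (Set.Icc (0 : ℝ) (2 * π)).indicator (f i) (φ i) := by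
    intro φ
    by_cases hφ : φ ∈ Set.univ.pi fun _ : ι => Set.Icc (0 : ℝ) (2 * π)
    · rw [Set.indicator_of_mem hφ]
      exact Finset.prod_congr rfl fun i _ =>
        (Set.indicator_of_mem (hφ i (Set.mem_univ i)) _).symm
    · rw [Set.indicator_of_notMem hφ]
      simp only [Set.mem_pi, Set.mem_univ, forall_true_left, not_forall] at hφ
      obtain ⟨i, hi⟩ := hφ
      exact (Finset.prod_eq_zero (Finset.mem_univ i)
        (Set.indicator_of_notMem hi _)).symm
  simp_rw [key]
  rw [MeasureTheory.volume_pi, MeasureTheory.integral_fintype_prod_eq_prod (ι := ι)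
    (fun i => (Set.Icc (0 : ℝ) (2 * π)).indicator (f i))]
  exact Finset.prod_congr rfl fun i _ => integral_indicator measurableSet_Icc

lemma integral_one_box : (∫ _x in Set.Icc (0 : ℝ) (2 * π), (1 : ℝ)) = 2 * π := by
  simp [Real.volume_Icc, ENNReal.toReal_ofReal Real.two_pi_pos.le, Real.pi_pos.le]

lemma integral_cos_box : (∫ x in Set.Icc (0 : ℝ) (2 * π), Real.cos x) = 0 := by
  rw [MeasureTheory.integral_Icc_eq_integral_Ioc,
    ← intervalIntegral.integral_of_le Real.two_pi_pos.le]
  simp [integral_cos, Real.sin_two_pi]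

lemma integral_cos_sq_box :
    (∫ x in Set.Icc (0 : ℝ) (2 * π), (1 + Real.cos x * Real.cos x)) = 3 * π := by
  rw [MeasureTheory.integral_Icc_eq_integral_Ioc,
    ← intervalIntegral.integral_of_le Real.two_pi_pos.le]
  have : ∀ x : ℝ, 1 + Real.cos x * Real.cos x = 1 + Real.cos x ^ 2 := by
    intro x; ring
  simp_rw [this]
  rw [intervalIntegral.integral_add (g := fun x => Real.cos x ^ 2) intervalIntegrable_const
    ((Real.continuous_cos.pow 2 : Continuous fun x => Real.cos x ^ 2).intervalIntegrable _ _)]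
  rw [integral_cos_sq]
  simp [Real.cos_two_pi, Real.sin_two_pi]
  ring

/-- Diagonal case. -/
lemma diag_integral (N K : ℕ) (j : Fin N) :
    (∫ φ in Set.univ.pi fun _ : Fin N × Fin K => Set.Icc (0 : ℝ) (2 * π),
        ∏ k, (1 + Real.cos (φ (j, k)) * Real.cos (φ (j, k))))
      = (2 * π) ^ (N * K) * (3 / 2 : ℝ) ^ K := by
  have hrepr : ∀ φ : Fin N × Fin K → ℝ,
      (∏ k, (1 + Real.cos (φ (j, k)) * Real.cos (φ (j, k))))
        = ∏ i : Fin N × Fin K,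
            (if i.1 = j then 1 + Real.cos (φ i) * Real.cos (φ i) else 1) := by
    intro φ
    rw [Fintype.prod_prod_type]
    rw [Finset.prod_eq_single_of_mem j (Finset.mem_univ j)]
    · simp
    · intro a _ ha
      simp [ha]
  simp_rw [hrepr]
  rw [box_integral_prod (fun (i : Fin N × Fin K) x =>
    (if i.1 = j then 1 + Real.cos x * Real.cos x else 1))]
  have hval : ∀ i : Fin N × Fin K,
      (∫ x in Set.Icc (0 : ℝ) (2 * π),
        (if i.1 = j then 1 + Real.cos x * Real.cos x else 1))
      = (if i.1 = j then 3 * π else 2 * π) := by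
    intro i
    split_ifs
    · exact integral_cos_sq_box
    · exact integral_one_box
  rw [Finset.prod_congr rfl fun i _ => hval i]
  rw [Fintype.prod_prod_type]
  have hinner : ∀ a : Fin N,
      (∏ _k : Fin K, (if a = j then 3 * π else 2 * π))
        = (if a = j then (3 * π) ^ K else (2 * π) ^ K) := by
    intro a
    split_ifs <;> simp
  rw [Finset.prod_congr rfl fun a _ => hinner a]
  rw [← Finset.mul_prod_erase Finset.univ _ (Finset.mem_univ j)]
  rw [if_pos rfl]
  rw [Finset.prod_congr rfl (fun a ha => if_neg (Finset.mem_erase.1 ha).1),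
    Finset.prod_const, Finset.card_erase_of_mem (Finset.mem_univ j), Finset.card_univ,
    Fintype.card_fin]
  have h3 : (3 * π) = (2 * π) * (3 / 2) := by ring
  rw [h3, mul_pow]
  rw [show (2 * π) ^ K * (3 / 2 : ℝ) ^ K * ((2 * π) ^ K) ^ (N - 1)
      = (2 * π) ^ K * ((2 * π) ^ K) ^ (N - 1) * (3 / 2 : ℝ) ^ K by ring]
  congr 1
  rw [← pow_mul, ← pow_add]
  congr 1
  have hNpos : 0 < N := j.pos
  cases N with
  | zero => exact absurd hNpos (lt_irrefl 0)
  | succ n =>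
    rw [Nat.succ_sub_one, Nat.succ_mul]
    ring

/-- Off-diagonal case. -/
lemma offdiag_integral (N K : ℕ) (j j' : Fin N) (hjj : j ≠ j') :
    (∫ φ in Set.univ.pi fun _ : Fin N × Fin K => Set.Icc (0 : ℝ) (2 * π),
        ∏ k, (1 + Real.cos (φ (j, k)) * Real.cos (φ (j', k))))
      = (2 * π) ^ (N * K) := by
  have expand : ∀ φ : Fin N × Fin K → ℝ,
      (∏ k, (1 + Real.cos (φ (j, k)) * Real.cos (φ (j', k))))
        = ∑ t ∈ (Finset.univ : Finset (Fin K)).powerset,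
            ∏ k ∈ Finset.univ \ t, Real.cos (φ (j, k)) * Real.cos (φ (j', k)) := by
    intro φ
    rw [Finset.prod_add]
    simp
  simp_rw [expand]
  have hcompact : IsCompact (Set.univ.pi fun _ : Fin N × Fin K => Set.Icc (0 : ℝ) (2 * π)) :=
    isCompact_univ_pi fun _ => isCompact_Icc
  rw [MeasureTheory.integral_finset_sum]
  · have hterm : ∀ t ∈ (Finset.univ : Finset (Fin K)).powerset,
        (∫ φ in Set.univ.pi fun _ : Fin N × Fin K => Set.Icc (0 : ℝ) (2 * π),
            ∏ k ∈ Finset.univ \ t, Real.cos (φ (j, k)) * Real.cos (φ (j', k)))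
          = if t = Finset.univ then (2 * π) ^ (N * K) else 0 := by
      intro t _
      set u : Finset (Fin K) := Finset.univ \ t with hu
      have hrepr : ∀ φ : Fin N × Fin K → ℝ,
          (∏ k ∈ u, Real.cos (φ (j, k)) * Real.cos (φ (j', k)))
            = ∏ i : Fin N × Fin K,
                ((if i.1 = j ∧ i.2 ∈ u then Real.cos (φ i) else 1) *
                 (if i.1 = j' ∧ i.2 ∈ u then Real.cos (φ i) else 1)) := by
        intro φ
        rw [Finset.prod_mul_distrib, Finset.prod_mul_distrib]
        congr 1
        · rw [Fintype.prod_prod_type]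
          rw [Finset.prod_eq_single_of_mem j (Finset.mem_univ j)]
          · simp [Finset.prod_ite_mem]
          · intro a _ ha
            exact Finset.prod_eq_one fun k _ => if_neg (by simp [ha])
        · rw [Fintype.prod_prod_type]
          rw [Finset.prod_eq_single_of_mem j' (Finset.mem_univ j')]
          · simp [Finset.prod_ite_mem]
          · intro a _ ha
            exact Finset.prod_eq_one fun k _ => if_neg (by simp [ha])
      simp_rw [hrepr]
      rw [box_integral_prod (fun (i : Fin N × Fin K) x =>
        (if i.1 = j ∧ i.2 ∈ u then Real.cos x else 1) *
        (if i.1 = j' ∧ i.2 ∈ u then Real.cos x else 1))]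
      by_cases ht : t = Finset.univ
      · rw [if_pos ht]
        have hu0 : u = ∅ := by simp [hu, ht]
        have : ∀ i : Fin N × Fin K,
            (∫ x in Set.Icc (0 : ℝ) (2 * π),
              ((if i.1 = j ∧ i.2 ∈ u then Real.cos x else 1) *
               (if i.1 = j' ∧ i.2 ∈ u then Real.cos x else 1))) = 2 * π := by
          intro i
          simp only [hu0, Finset.notMem_empty, and_false, if_false, mul_one]
          exact integral_one_box
        rw [Finset.prod_congr rfl fun i _ => this i, Finset.prod_const, Finset.card_univ,
          Fintype.card_prod, Fintype.card_fin, Fintype.card_fin]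
      · rw [if_neg ht]
        have hune : u.Nonempty :=
          Finset.sdiff_nonempty.2 fun hsub => ht (Finset.univ_subset_iff.1 hsub)
        obtain ⟨k0, hk0⟩ := hune
        apply Finset.prod_eq_zero (Finset.mem_univ (j, k0))
        have hfun : ∀ x : ℝ,
            (if ((j, k0) : Fin N × Fin K).1 = j ∧ ((j, k0) : Fin N × Fin K).2 ∈ u
                then Real.cos x else 1) *
              (if ((j, k0) : Fin N × Fin K).1 = j' ∧ ((j, k0) : Fin N × Fin K).2 ∈ u
                then Real.cos x else 1) = Real.cos x := by
          intro x
          rw [if_pos ⟨rfl, hk0⟩, if_neg (fun h => hjj h.1), mul_one]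
        simp [hk0, hjj, integral_cos_box]
    rw [Finset.sum_congr rfl hterm]
    rw [Finset.sum_ite_eq' ((Finset.univ : Finset (Fin K)).powerset) Finset.univ
      (fun _ => (2 * π) ^ (N * K))]
    simp
  · intro t _
    have hcont : Continuous fun φ : Fin N × Fin K → ℝ =>
        ∏ k ∈ Finset.univ \ t, Real.cos (φ (j, k)) * Real.cos (φ (j', k)) := by
      apply continuous_finset_prod
      intro k _
      exact ((Real.continuous_cos.comp (continuous_apply (j, k))).mul
        (Real.continuous_cos.comp (continuous_apply (j', k))))
    exact hcont.continuousOn.integrableOn_compact hcompact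

/-- Combined pair integral. -/
lemma pair_integral (N K : ℕ) (j j' : Fin N) :
    (∫ φ in Set.univ.pi fun _ : Fin N × Fin K => Set.Icc (0 : ℝ) (2 * π),
        ∏ k, (1 + Real.cos (φ (j, k)) * Real.cos (φ (j', k))))
      = (2 * π) ^ (N * K) * (if j = j' then (3 / 2 : ℝ) ^ K else 1) := by
  by_cases h : j = j'
  · subst h
    rw [if_pos rfl]
    exact diag_integral N K j
  · rw [if_neg h, mul_one]
    exact offdiag_integral N K j j' h

/-- The weighted moment functional of the two-device protocol with strong postselection,
averaged over independent uniform phases `φ ∈ [0,2π]^{N×K}`: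
`(2π)^{-NK} ∫ ∑_{j,j'} w_j p_j p_{j'} ∏_k (1 + cos(φ_j^{(k)}) cos(φ_{j'}^{(k)})) dφ
  = ((3/2)^K - 1) ∑_j w_j p_j² + ∑_j w_j p_j`. -/
theorem strong_postselection_weighted_moment
    (N K : ℕ) (hN : 1 ≤ N) (hK : 1 ≤ K)
    (p : Fin N → ℝ) (hp : ∀ j, 0 ≤ p j) (hsum : ∑ j, p j = 1)
    (w : Fin N → ℝ) :
    ((2 * π) ^ (N * K))⁻¹ *
        (∫ φ in Set.univ.pi fun _ : Fin N × Fin K => Set.Icc (0 : ℝ) (2 * π),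
          ∑ j, ∑ j', w j * p j * p j' *
            ∏ k, (1 + Real.cos (φ (j, k)) * Real.cos (φ (j', k))))
      = ((3 / 2 : ℝ) ^ K - 1) * ∑ j, w j * p j ^ 2 + ∑ j, w j * p j := by
  have hcompact : IsCompact (Set.univ.pi fun _ : Fin N × Fin K => Set.Icc (0 : ℝ) (2 * π)) :=
    isCompact_univ_pi fun _ => isCompact_Icc
  have hint : ∀ jj : Fin N × Fin N,
      IntegrableOn (fun φ : Fin N × Fin K → ℝ => w jj.1 * p jj.1 * p jj.2 *
          ∏ k, (1 + Real.cos (φ (jj.1, k)) * Real.cos (φ (jj.2, k))))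
        (Set.univ.pi fun _ : Fin N × Fin K => Set.Icc (0 : ℝ) (2 * π)) := by
    intro jj
    have hcont : Continuous fun φ : Fin N × Fin K → ℝ => w jj.1 * p jj.1 * p jj.2 *
        ∏ k, (1 + Real.cos (φ (jj.1, k)) * Real.cos (φ (jj.2, k))) := by
      apply Continuous.mul continuous_const
      apply continuous_finset_prod
      intro k _
      exact continuous_const.add
        ((Real.continuous_cos.comp (continuous_apply (jj.1, k))).mul
          (Real.continuous_cos.comp (continuous_apply (jj.2, k))))
    exact hcont.continuousOn.integrableOn_compact hcompact
  have hswap :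
      (∫ φ in Set.univ.pi fun _ : Fin N × Fin K => Set.Icc (0 : ℝ) (2 * π),
          ∑ j, ∑ j', w j * p j * p j' *
            ∏ k, (1 + Real.cos (φ (j, k)) * Real.cos (φ (j', k))))
        = ∑ j, ∑ j', w j * p j * p j' *
            ∫ φ in Set.univ.pi fun _ : Fin N × Fin K => Set.Icc (0 : ℝ) (2 * π),
              ∏ k, (1 + Real.cos (φ (j, k)) * Real.cos (φ (j', k))) := by
    have : ∀ φ : Fin N × Fin K → ℝ,
        (∑ j, ∑ j', w j * p j * p j' *
            ∏ k, (1 + Real.cos (φ (j, k)) * Real.cos (φ (j', k))))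
          = ∑ jj : Fin N × Fin N, w jj.1 * p jj.1 * p jj.2 *
              ∏ k, (1 + Real.cos (φ (jj.1, k)) * Real.cos (φ (jj.2, k))) := by
      intro φ
      rw [← Finset.sum_product']
      rfl
    simp_rw [this]
    rw [MeasureTheory.integral_finset_sum _ fun jj _ => hint jj]
    rw [← Finset.sum_product']
    refine Finset.sum_congr rfl fun jj _ => ?_
    exact MeasureTheory.integral_const_mul _ _
  rw [hswap]
  have hval : ∀ j j' : Fin N,
      w j * p j * p j' *
          (∫ φ in Set.univ.pi fun _ : Fin N × Fin K => Set.Icc (0 : ℝ) (2 * π),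
            ∏ k, (1 + Real.cos (φ (j, k)) * Real.cos (φ (j', k))))
        = (2 * π) ^ (N * K) *
            (w j * p j * p j' * (if j = j' then (3 / 2 : ℝ) ^ K else 1)) := by
    intro j j'
    rw [pair_integral N K j j']
    ring
  simp_rw [hval, ← Finset.mul_sum]
  rw [← mul_assoc, inv_mul_cancel₀ (by positivity : ((2 * π : ℝ)) ^ (N * K) ≠ 0), one_mul]
  have hsplit : ∀ j j' : Fin N,
      w j * p j * p j' * (if j = j' then (3 / 2 : ℝ) ^ K else 1)
        = w j * p j * p j' +
            (if j' = j then ((3 / 2 : ℝ) ^ K - 1) * (w j * p j ^ 2) else 0) := by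
    intro j j'
    rcases eq_or_ne j j' with h | h
    · subst h
      rw [if_pos rfl, if_pos rfl]
      ring
    · rw [if_neg h, if_neg (Ne.symm h)]
      ring
  simp_rw [hsplit, Finset.sum_add_distrib]
  rw [Finset.sum_congr rfl fun j _ => Finset.sum_ite_eq' Finset.univ j
    (fun _ => ((3 / 2 : ℝ) ^ K - 1) * (w j * p j ^ 2))]
  simp only [Finset.mem_univ, if_pos]
  rw [← Finset.mul_sum]
  have h1 : ∀ j : Fin N, (∑ j', w j * p j * p j') = w j * p j := by
    intro j
    rw [← Finset.mul_sum, hsum, mul_one]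
  rw [Finset.sum_congr rfl fun j _ => h1 j]
  ring
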